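/- A graph G is contained in H₁ ⊠ H₂ ⊠ K_c if and only if G has vertex partitions 𝒫₁ and 𝒫₂ such that the quotient G/𝒫ᵢ is contained in Hᵢ for each i ∈ {1,2}, and |A₁ ∩ A₂| ≤ c for all parts A₁ ∈ 𝒫₁ and A₂ ∈ 𝒫₂. -/

import Mathlib

open SimpleGraph

universe u v

/-- The strong product `G ⊠ H` of two simple graphs: distinct vertices `(a,b)`, `(c,d)` are
adjacent iff (`a = c` or `a ~ c`) and (`b = d` or `b ~ d`). -/
def SimpleGraph.strongProd {α β : Type*} (G : SimpleGraph α) (H : SimpleGraph β) :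
    SimpleGraph (α × β) where
  Adj x y := x ≠ y ∧ (x.1 = y.1 ∨ G.Adj x.1 y.1) ∧ (x.2 = y.2 ∨ H.Adj x.2 y.2)
  symm := by
    refine ⟨?_⟩
    rintro ⟨a, b⟩ ⟨c, d⟩ ⟨hne, h1, h2⟩
    refine ⟨Ne.symm hne, ?_, ?_⟩
    · rcases h1 with h | h
      · exact Or.inl h.symm
      · exact Or.inr h.symm
    · rcases h2 with h | h
      · exact Or.inl h.symm
      · exact Or.inr h.symm
  loopless := by refine ⟨?_⟩; rintro x ⟨hne, -, -⟩; exact hne rfl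

/-- `H.IsContained G` means `H` is isomorphic to a subgraph of `G`. -/
def SimpleGraph.IsContainedEmb {α β : Type*} (H : SimpleGraph α) (G : SimpleGraph β) : Prop :=
  ∃ f : α ↪ β, ∀ a b, H.Adj a b → G.Adj (f a) (f b)

/-- The quotient of `G` by a partition of its vertex set (given as an equivalence relation):
distinct parts are adjacent iff some edge of `G` joins them. -/
def SimpleGraph.quot {V : Type*} (G : SimpleGraph V) (s : Setoid V) :
    SimpleGraph (Quotient s) where
  Adj p q := p ≠ q ∧ ∃ a b : V, Quotient.mk s a = p ∧ Quotient.mk s b = q ∧ G.Adj a b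
  symm := by
    refine ⟨?_⟩
    rintro p q ⟨hne, a, b, ha, hb, hab⟩
    exact ⟨hne.symm, b, a, hb, ha, hab.symm⟩
  loopless := by refine ⟨?_⟩; rintro p ⟨hne, -⟩; exact hne rfl

/-- A graph `G` is contained in `H₁ ⊠ H₂ ⊠ K_c` iff `G` has vertex partitions `𝒫₁`, `𝒫₂`
(given as equivalence relations) such that `G/𝒫ᵢ` is contained in `Hᵢ` for `i = 1, 2`, and
every part of `𝒫₁` meets every part of `𝒫₂` in at most `c` vertices. -/
theorem stmt19 {V α β : Type*} [Fintype V]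
    (G : SimpleGraph V) (H₁ : SimpleGraph α) (H₂ : SimpleGraph β) (c : ℕ) :
    G.IsContainedEmb ((H₁.strongProd H₂).strongProd (completeGraph (Fin c))) ↔
      ∃ s₁ s₂ : Setoid V,
        (G.quot s₁).IsContainedEmb H₁ ∧ (G.quot s₂).IsContainedEmb H₂ ∧
        ∀ a b : V, ({x | s₁ a x} ∩ {x | s₂ b x}).ncard ≤ c := by
  constructor
  · rintro ⟨f, hf⟩
    refine ⟨Setoid.ker (fun x => (f x).1.1), Setoid.ker (fun x => (f x).1.2), ?_, ?_, ?_⟩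
    · refine ⟨⟨Quotient.lift (fun x => (f x).1.1) (fun a b h => h), ?_⟩, ?_⟩
      · refine Quotient.ind₂ ?_
        intro a b h
        exact Quotient.sound h
      · rintro p q ⟨hne, a, b, rfl, rfl, hab⟩
        have hne' : (f a).1.1 ≠ (f b).1.1 := fun h => hne (Quotient.sound h)
        obtain ⟨-, h1, -⟩ := hf a b hab
        rcases h1 with h | ⟨-, h, -⟩
        · exact absurd (congrArg Prod.fst h) hne'
        · rcases h with h | h
          · exact absurd h hne'
          · exact h
    · refine ⟨⟨Quotient.lift (fun x => (f x).1.2) (fun a b h => h), ?_⟩, ?_⟩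
      · refine Quotient.ind₂ ?_
        intro a b h
        exact Quotient.sound h
      · rintro p q ⟨hne, a, b, rfl, rfl, hab⟩
        have hne' : (f a).1.2 ≠ (f b).1.2 := fun h => hne (Quotient.sound h)
        obtain ⟨-, h1, -⟩ := hf a b hab
        rcases h1 with h | ⟨-, -, h⟩
        · exact absurd (congrArg Prod.snd h) hne'
        · rcases h with h | h
          · exact absurd h hne'
          · exact h
    · intro a b
      set S : Set V := {x | (f a).1.1 = (f x).1.1} ∩ {x | (f b).1.2 = (f x).1.2} with hS
      have hinj : Set.InjOn (fun x => (f x).2) S := by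
        rintro x ⟨hx1, hx2⟩ y ⟨hy1, hy2⟩ hxy
        apply f.injective
        exact Prod.ext (Prod.ext (hx1.symm.trans hy1) (hx2.symm.trans hy2)) hxy
      calc S.ncard = ((fun x => (f x).2) '' S).ncard :=
            (Set.ncard_image_of_injOn hinj).symm
        _ ≤ (Set.univ : Set (Fin c)).ncard :=
            Set.ncard_le_ncard (Set.subset_univ _) Set.finite_univ
        _ = c := by simp [Set.ncard_univ]
  · rintro ⟨s₁, s₂, ⟨f₁, hf₁⟩, ⟨f₂, hf₂⟩, hc⟩
    set s₃ : Setoid V := s₁ ⊓ s₂ with hs₃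
    have key : ∀ p : Quotient s₃, ∃ g : V → Fin c,
        ∀ x y, Quotient.mk s₃ x = p → Quotient.mk s₃ y = p → g x = g y → x = y := by
      intro p
      classical
      set C : Set V := {x | Quotient.mk s₃ x = p} with hC
      have hsub : C ⊆ {x | s₁ p.out x} ∩ {x | s₂ p.out x} := by
        intro x hx
        have : Quotient.mk s₃ x = Quotient.mk s₃ p.out := by
          rw [hx]; exact (Quotient.out_eq p).symm
        have h3 : s₃ x p.out := Quotient.exact this
        exact ⟨s₁.symm h3.1, s₂.symm h3.2⟩
      haveI : Fintype C := Set.Finite.fintype (Set.toFinite _)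
      have hcard : Fintype.card C ≤ c := by
        rw [← Nat.card_eq_fintype_card, Nat.card_coe_set_eq]
        exact le_trans (Set.ncard_le_ncard hsub (Set.toFinite _)) (hc p.out p.out)
      obtain ⟨emb⟩ := Function.Embedding.nonempty_of_card_le
        (by simpa using hcard : Fintype.card C ≤ Fintype.card (Fin c))
      refine ⟨fun x => if h : Quotient.mk s₃ x = p then emb ⟨x, h⟩
        else emb ⟨p.out, Quotient.out_eq p⟩, ?_⟩
      intro x y hx hy hxy
      simp only [dif_pos hx, dif_pos hy] at hxy
      exact congrArg Subtype.val (emb.injective hxy)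
    choose g hg using key
    have hinj : Function.Injective
        (fun x => ((f₁ (Quotient.mk s₁ x), f₂ (Quotient.mk s₂ x)),
          g (Quotient.mk s₃ x) x) : V → (α × β) × Fin c) := by
      intro x y h
      have h1 : Quotient.mk s₁ x = Quotient.mk s₁ y :=
        f₁.injective (congrArg (fun z => z.1.1) h)
      have h2 : Quotient.mk s₂ x = Quotient.mk s₂ y :=
        f₂.injective (congrArg (fun z => z.1.2) h)
      have h3 : Quotient.mk s₃ x = Quotient.mk s₃ y :=
        Quotient.sound ⟨Quotient.exact h1, Quotient.exact h2⟩
      have hgxy : g (Quotient.mk s₃ x) x = g (Quotient.mk s₃ y) y :=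
        congrArg (fun z => z.2) h
      rw [h3] at hgxy
      exact hg (Quotient.mk s₃ y) x y h3 rfl hgxy
    refine ⟨⟨_, hinj⟩, ?_⟩
    intro x y hxy
    refine ⟨fun h => G.ne_of_adj hxy (hinj h), ?_, ?_⟩
    · by_cases h1 : Quotient.mk s₁ x = Quotient.mk s₁ y
      · by_cases h2 : Quotient.mk s₂ x = Quotient.mk s₂ y
        · exact Or.inl (by simp [h1, h2])
        · refine Or.inr ⟨?_, Or.inl (congrArg f₁ h1), Or.inr (hf₂ _ _ ⟨h2, x, y, rfl, rfl, hxy⟩)⟩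
          intro h
          exact h2 (f₂.injective (congrArg Prod.snd h))
      · by_cases h2 : Quotient.mk s₂ x = Quotient.mk s₂ y
        · refine Or.inr ⟨?_, Or.inr (hf₁ _ _ ⟨h1, x, y, rfl, rfl, hxy⟩), Or.inl (congrArg f₂ h2)⟩
          intro h
          exact h1 (f₁.injective (congrArg Prod.fst h))
        · refine Or.inr ⟨?_, Or.inr (hf₁ _ _ ⟨h1, x, y, rfl, rfl, hxy⟩),
            Or.inr (hf₂ _ _ ⟨h2, x, y, rfl, rfl, hxy⟩)⟩
          intro h
          exact h1 (f₁.injective (congrArg Prod.fst h))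
    · by_cases h : g (Quotient.mk s₃ x) x = g (Quotient.mk s₃ y) y
      · exact Or.inl h
      · exact Or.inr h
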